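/- Let X and Y be Banach spaces, p ∈ [1, ∞), and let 𝒯 ⊆ B(X, Y) and, for each n ∈ ℕ, 𝒯_n ⊆ B(X, Y) be families of bounded linear operators. Assume that sup_{n ∈ ℕ} R_p(𝒯_n) < ∞ (i.e., each 𝒯_n is R-bounded with uniformly bounded R_p-bounds) and that lim_{n→∞} sup_{T ∈ 𝒯} inf_{T_n ∈ 𝒯_n} ‖T − T_n‖_{B(X,Y)} = 0. Then 𝒯 is R-bounded and R_p(𝒯) ≤ limsup_{n→∞} R_p(𝒯_n). -/

import Mathlib

open scoped BigOperators

noncomputable section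

/-- The discrete Rademacher average `(2^{-N} ∑_{ε ∈ {−1,1}^N} ‖∑_ν ε_ν v_ν‖^p)^{1/p}`. -/
def radAvg {Y : Type*} [NormedAddCommGroup Y] (p : ℝ) {N : ℕ} (v : Fin N → Y) : ℝ :=
  (((2 : ℝ) ^ N)⁻¹ * ∑ ε : Fin N → Bool, ‖∑ ν, (if ε ν then v ν else -v ν)‖ ^ p) ^ p⁻¹

/-- A family `T` of bounded operators is R-bounded with `R_p`-bound at most `C`. -/
def IsRBoundedWith {X Y : Type*} [NormedAddCommGroup X] [NormedSpace ℂ X]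
    [NormedAddCommGroup Y] [NormedSpace ℂ Y]
    (p : ℝ) (T : Set (X →L[ℂ] Y)) (C : ℝ) : Prop :=
  ∀ (N : ℕ) (t : Fin N → X →L[ℂ] Y), (∀ ν, t ν ∈ T) → ∀ x : Fin N → X,
    radAvg p (fun ν => t ν (x ν)) ≤ C * radAvg p x

/-- A family of bounded operators is R-bounded. -/
def IsRBounded {X Y : Type*} [NormedAddCommGroup X] [NormedSpace ℂ X]
    [NormedAddCommGroup Y] [NormedSpace ℂ Y] (p : ℝ) (T : Set (X →L[ℂ] Y)) : Prop :=
  ∃ C, 0 ≤ C ∧ IsRBoundedWith p T C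

/-- The `R_p`-bound of a family of bounded operators. -/
def rBound {X Y : Type*} [NormedAddCommGroup X] [NormedSpace ℂ X]
    [NormedAddCommGroup Y] [NormedSpace ℂ Y] (p : ℝ) (T : Set (X →L[ℂ] Y)) : ℝ :=
  sInf {C | 0 ≤ C ∧ IsRBoundedWith p T C}

section Aux

variable {Y : Type*} [NormedAddCommGroup Y] {p : ℝ} {N : ℕ}

lemma radAvg_nonneg (v : Fin N → Y) : 0 ≤ radAvg p v := by
  apply Real.rpow_nonneg
  apply mul_nonneg (by positivity)
  exact Finset.sum_nonneg fun ε _ => Real.rpow_nonneg (norm_nonneg _) p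

lemma radAvg_le (hp : 1 ≤ p) {v : Fin N → Y} {M : ℝ} (hM : 0 ≤ M)
    (h : ∀ ε : Fin N → Bool, ‖∑ ν, (if ε ν then v ν else -v ν)‖ ≤ M) :
    radAvg p v ≤ M := by
  have hp0 : 0 < p := lt_of_lt_of_le one_pos hp
  have h1 : ∑ ε : Fin N → Bool, ‖∑ ν, (if ε ν then v ν else -v ν)‖ ^ p
      ≤ ∑ _ε : Fin N → Bool, M ^ p :=
    Finset.sum_le_sum fun ε _ => Real.rpow_le_rpow (norm_nonneg _) (h ε) hp0.le
  have hcard : (Finset.univ : Finset (Fin N → Bool)).card = 2 ^ N := by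
    simp [Finset.card_univ]
  have h2 : ((2 : ℝ) ^ N)⁻¹ * ∑ ε : Fin N → Bool, ‖∑ ν, (if ε ν then v ν else -v ν)‖ ^ p
      ≤ M ^ p := by
    rw [inv_mul_le_iff₀ (by positivity)]
    calc _ ≤ ∑ _ε : Fin N → Bool, M ^ p := h1
    _ = (2:ℝ)^N * M ^ p := by rw [Finset.sum_const, hcard]; ring
  calc radAvg p v ≤ (M ^ p) ^ p⁻¹ := by
        apply Real.rpow_le_rpow _ h2 (by positivity)
        apply mul_nonneg (by positivity)
        exact Finset.sum_nonneg fun ε _ => Real.rpow_nonneg (norm_nonneg _) p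
  _ = M := Real.rpow_rpow_inv hM hp0.ne'

lemma radAvg_add_le (hp : 1 ≤ p) (v w : Fin N → Y) :
    radAvg p (fun ν => v ν + w ν) ≤ radAvg p v + radAvg p w := by
  have hp0 : 0 < p := lt_of_lt_of_le one_pos hp
  set c : ℝ := ((2 : ℝ) ^ N)⁻¹ with hc
  have hc0 : 0 ≤ c := by positivity
  set f : (Fin N → Bool) → ℝ := fun ε => ‖∑ ν, (if ε ν then v ν else -v ν)‖ with hf
  set g : (Fin N → Bool) → ℝ := fun ε => ‖∑ ν, (if ε ν then w ν else -w ν)‖ with hg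
  have key : ∀ ε : Fin N → Bool,
      ‖∑ ν, (if ε ν then v ν + w ν else -(v ν + w ν))‖ ≤ f ε + g ε := by
    intro ε
    have : (∑ ν, (if ε ν then v ν + w ν else -(v ν + w ν)))
        = (∑ ν, (if ε ν then v ν else -v ν)) + (∑ ν, (if ε ν then w ν else -w ν)) := by
      rw [← Finset.sum_add_distrib]
      congr 1; funext ν; by_cases h : ε ν <;> simp [h, neg_add, add_comm]
    rw [this]; exact norm_add_le _ _
  have expand : ∀ u : Fin N → Y, radAvg p u
      = c ^ p⁻¹ * (∑ ε : Fin N → Bool, ‖∑ ν, (if ε ν then u ν else -u ν)‖ ^ p) ^ p⁻¹ := by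
    intro u
    rw [radAvg, Real.mul_rpow hc0]
    exact Finset.sum_nonneg fun ε _ => Real.rpow_nonneg (norm_nonneg _) p
  rw [expand, expand, expand]
  have step1 : (∑ ε : Fin N → Bool, ‖∑ ν, (if ε ν then v ν + w ν else -(v ν + w ν))‖ ^ p) ^ p⁻¹
      ≤ (∑ ε : Fin N → Bool, (f ε + g ε) ^ p) ^ p⁻¹ := by
    apply Real.rpow_le_rpow
    · exact Finset.sum_nonneg fun ε _ => Real.rpow_nonneg (norm_nonneg _) p
    · exact Finset.sum_le_sum fun ε _ =>
        Real.rpow_le_rpow (norm_nonneg _) (key ε) hp0.le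
    · positivity
  have step2 : (∑ ε : Fin N → Bool, (f ε + g ε) ^ p) ^ p⁻¹
      ≤ (∑ ε : Fin N → Bool, f ε ^ p) ^ p⁻¹ + (∑ ε : Fin N → Bool, g ε ^ p) ^ p⁻¹ := by
    have := Real.Lp_add_le_of_nonneg (s := Finset.univ) (f := f) (g := g) hp
      (fun ε _ => norm_nonneg _) (fun ε _ => norm_nonneg _)
    simpa [one_div] using this
  calc c ^ p⁻¹ * (∑ ε : Fin N → Bool, ‖∑ ν, (if ε ν then v ν + w ν else -(v ν + w ν))‖ ^ p) ^ p⁻¹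
      ≤ c ^ p⁻¹ * ((∑ ε : Fin N → Bool, f ε ^ p) ^ p⁻¹ + (∑ ε : Fin N → Bool, g ε ^ p) ^ p⁻¹) :=
        mul_le_mul_of_nonneg_left (step1.trans step2) (by positivity)
  _ = _ := by ring

variable {X : Type*} [NormedAddCommGroup X] [NormedSpace ℂ X] [NormedSpace ℂ Y]

lemma isRBoundedWith_mono {T : Set (X →L[ℂ] Y)} {C C' : ℝ} (hCC : C ≤ C')
    (h : IsRBoundedWith p T C) : IsRBoundedWith p T C' := fun N t ht x =>
  (h N t ht x).trans (mul_le_mul_of_nonneg_right hCC (radAvg_nonneg x))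

lemma isRBoundedWith_rBound_add {T : Set (X →L[ℂ] Y)} (hRB : IsRBounded p T)
    {δ : ℝ} (hδ : 0 < δ) : IsRBoundedWith p T (rBound p T + δ) := by
  obtain ⟨C, hC0, hC⟩ := hRB
  have hne : {C | 0 ≤ C ∧ IsRBoundedWith p T C}.Nonempty := ⟨C, hC0, hC⟩
  obtain ⟨D, hD, hDlt⟩ := exists_lt_of_csInf_lt hne
    (lt_add_of_pos_right (rBound p T) hδ)
  exact isRBoundedWith_mono hDlt.le hD.2

end Aux

/-- If the families `𝒯n` have uniformly bounded `R_p`-bounds and approximate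
`𝒯` in the sense that `sup_{T ∈ 𝒯} inf_{S ∈ 𝒯n} ‖T − S‖ → 0`, then `𝒯` is R-bounded with
`R_p(𝒯) ≤ limsup_n R_p(𝒯n)`. -/
theorem stmt3 {X Y : Type*} [NormedAddCommGroup X] [NormedSpace ℂ X]
    [NormedAddCommGroup Y] [NormedSpace ℂ Y]
    (p : ℝ) (hp : 1 ≤ p)
    (𝒯 : Set (X →L[ℂ] Y)) (𝒯n : ℕ → Set (X →L[ℂ] Y))
    (hRB : ∀ n, IsRBounded p (𝒯n n))
    (hbdd : ∃ B : ℝ, ∀ n, rBound p (𝒯n n) ≤ B)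
    (happrox : ∀ ε > 0, ∃ N : ℕ, ∀ n ≥ N, ∀ T ∈ 𝒯, ∃ S ∈ 𝒯n n, ‖T - S‖ < ε) :
    IsRBounded p 𝒯 ∧
      rBound p 𝒯 ≤ Filter.limsup (fun n => rBound p (𝒯n n)) Filter.atTop := by
  obtain ⟨B, hB⟩ := hbdd
  have hnn : ∀ n, 0 ≤ rBound p (𝒯n n) := fun n => Real.sInf_nonneg fun C hC => hC.1
  set L := Filter.limsup (fun n => rBound p (𝒯n n)) Filter.atTop with hLdef
  have hbu : Filter.IsBoundedUnder (· ≤ ·) Filter.atTop (fun n => rBound p (𝒯n n)) :=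
    Filter.isBoundedUnder_of ⟨B, hB⟩
  have hL0 : 0 ≤ L :=
    Filter.le_limsup_of_frequently_le ((Filter.Eventually.of_forall hnn).frequently) hbu
  have key : IsRBoundedWith p 𝒯 L := by
    intro N t ht x
    set A := radAvg p x with hAdef
    have hA : 0 ≤ A := radAvg_nonneg x
    set S : ℝ := ∑ ν, ‖x ν‖ with hSdef
    have hS : 0 ≤ S := Finset.sum_nonneg fun ν _ => norm_nonneg _
    have main : ∀ η > (0:ℝ), radAvg p (fun ν => t ν (x ν)) ≤ L * A + η := by
      intro η hη
      set δ : ℝ := η / (4 * (A + 1)) with hδdef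
      have hδ : 0 < δ := by positivity
      set ε' : ℝ := η / (2 * (S + 1)) with hε'def
      have hε' : 0 < ε' := by positivity
      obtain ⟨N₀, hN₀⟩ := happrox ε' hε'
      have hev : ∀ᶠ n in Filter.atTop, rBound p (𝒯n n) < L + δ :=
        Filter.eventually_lt_of_limsup_lt (lt_add_of_pos_right L hδ) hbu
      obtain ⟨N₁, hN₁⟩ := Filter.eventually_atTop.1 hev
      set n := max N₀ N₁ with hndef
      choose S' hS'mem hS'norm using fun ν : Fin N =>
        hN₀ n (le_max_left _ _) (t ν) (ht ν)
      have hsplit : (fun ν => t ν (x ν))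
          = fun ν => S' ν (x ν) + (t ν - S' ν) (x ν) := by
        funext ν; simp
      rw [hsplit]
      have h1 : radAvg p (fun ν => S' ν (x ν)) ≤ (rBound p (𝒯n n) + δ) * A :=
        isRBoundedWith_rBound_add (hRB n) hδ N S' hS'mem x
      have h2 : radAvg p (fun ν => (t ν - S' ν) (x ν)) ≤ ε' * S := by
        apply radAvg_le hp (by positivity)
        intro ε
        calc ‖∑ ν, (if ε ν then (t ν - S' ν) (x ν) else -((t ν - S' ν) (x ν)))‖
            ≤ ∑ ν, ‖(if ε ν then (t ν - S' ν) (x ν) else -((t ν - S' ν) (x ν)))‖ :=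
              norm_sum_le _ _
        _ ≤ ∑ ν, ε' * ‖x ν‖ := by
              apply Finset.sum_le_sum
              intro ν _
              have hb : ‖(t ν - S' ν) (x ν)‖ ≤ ε' * ‖x ν‖ :=
                ((t ν - S' ν).le_opNorm (x ν)).trans
                  (mul_le_mul_of_nonneg_right (hS'norm ν).le (norm_nonneg _))
              have hgoal : ‖(if ε ν then (t ν - S' ν) (x ν) else -((t ν - S' ν) (x ν)))‖
                  = ‖(t ν - S' ν) (x ν)‖ := by
                by_cases h : ε ν
                · rw [if_pos h]
                · rw [if_neg h, norm_neg]
              rw [hgoal]; exact hb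
        _ = ε' * S := by rw [hSdef, Finset.mul_sum]
      have hδA : δ * A ≤ η / 4 := by
        have h4 : δ * (A + 1) = η / 4 := by
          rw [hδdef]; field_simp
        nlinarith
      have hε'S : ε' * S ≤ η / 2 := by
        have h4 : ε' * (S + 1) = η / 2 := by
          rw [hε'def]; field_simp
        nlinarith
      have hbn : rBound p (𝒯n n) + δ ≤ L + 2 * δ := by
        have := hN₁ n (le_max_right _ _)
        linarith
      calc radAvg p (fun ν => S' ν (x ν) + (t ν - S' ν) (x ν))
          ≤ radAvg p (fun ν => S' ν (x ν)) + radAvg p (fun ν => (t ν - S' ν) (x ν)) :=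
            radAvg_add_le hp _ _
      _ ≤ (rBound p (𝒯n n) + δ) * A + ε' * S := add_le_add h1 h2
      _ ≤ (L + 2 * δ) * A + ε' * S :=
            add_le_add_left (mul_le_mul_of_nonneg_right hbn hA) _
      _ = L * A + 2 * (δ * A) + ε' * S := by ring
      _ ≤ L * A + 2 * (η / 4) + η / 2 := by linarith
      _ = L * A + η := by ring
    exact le_of_forall_pos_le_add main
  refine ⟨⟨L, hL0, key⟩, ?_⟩
  exact csInf_le ⟨0, fun C hC => hC.1⟩ ⟨hL0, key⟩

end
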